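/- arXiv:2004.02439 — 4 statements merged into one kernel-verified Lean document; each statement's English description precedes it below -/
import Mathlib

section
/- (McNaughton) Let c_1, …, c_n ≥ 0 be job execution requirements to be scheduled in the interval (t1, t2] on m identical unit-capacity processors, such that no job runs simultaneously on two processors. If Σ_{i=1}^n c_i ≤ m·(t2 − t1), then a feasible schedule exists if and only if c_i ≤ t2 − t1 for all i. -/
open MeasureTheory

lemma grid_union (M : ℕ) (L : ℝ) (hL : 0 ≤ L) :
    ⋃ k ∈ Finset.range M, Set.Ioc ((k:ℝ)*L) (((k:ℝ)+1)*L) = Set.Ioc 0 ((M:ℝ)*L) := by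
  induction M with
  | zero => simp
  | succ M ih =>
    rw [Finset.range_add_one, Finset.set_biUnion_insert, ih, Set.union_comm,
      Set.Ioc_union_Ioc_eq_Ioc (by positivity) (by nlinarith)]
    push_cast
    ring_nf

/-- McNaughton: a set of jobs with total demand at most `m * (t2 - t1)` is
schedulable in `(t1, t2]` on `m` identical unit-capacity processors (no job
simultaneously on two processors) iff every job fits in the interval. -/
theorem mcnaughton_feasibility (n m : ℕ) (t1 t2 : ℝ) (hm : 1 ≤ m) (h12 : t1 ≤ t2)
    (c : Fin n → ℝ) (hc : ∀ i, 0 ≤ c i)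
    (hsum : ∑ i, c i ≤ m * (t2 - t1)) :
    (∃ S : Fin n → Fin m → Set ℝ,
      (∀ i k, MeasurableSet (S i k)) ∧
      (∀ i k, S i k ⊆ Set.Ioc t1 t2) ∧
      (∀ i k k', k ≠ k' → Disjoint (S i k) (S i k')) ∧
      (∀ k i i', i ≠ i' → Disjoint (S i k) (S i' k)) ∧
      (∀ i, ∑ k, (volume (S i k)).toReal = c i))
    ↔ (∀ i, c i ≤ t2 - t1) := by
  constructor
  · rintro ⟨S, hmeas, hsub, hdisjk, _, hvol⟩ i
    have hfin : ∀ k : Fin m, volume (S i k) ≠ ⊤ :=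
      fun k => (lt_of_le_of_lt (measure_mono (hsub i k)) measure_Ioc_lt_top).ne
    have h1 : (⋃ k ∈ (Finset.univ : Finset (Fin m)), S i k) ⊆ Set.Ioc t1 t2 := by
      simp only [Set.iUnion_subset_iff]
      intro k _
      exact hsub i k
    have key : ∑ k, (volume (S i k)).toReal
        = (volume (⋃ k ∈ (Finset.univ : Finset (Fin m)), S i k)).toReal := by
      rw [measure_biUnion_finset (fun k _ k' _ hkk' => hdisjk i k k' hkk')
        (fun k _ => hmeas i k), ENNReal.toReal_sum (fun k _ => hfin k)]
    rw [← hvol i, key]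
    calc (volume (⋃ k ∈ (Finset.univ : Finset (Fin m)), S i k)).toReal
        ≤ (volume (Set.Ioc t1 t2)).toReal :=
          ENNReal.toReal_mono measure_Ioc_lt_top.ne (measure_mono h1)
      _ = t2 - t1 := by rw [Real.volume_Ioc, ENNReal.toReal_ofReal (by linarith)]
  · intro hle
    set L : ℝ := t2 - t1 with hLdef
    have hL0 : 0 ≤ L := by linarith
    set A : Fin n → ℝ := fun i => ∑ j ∈ Finset.Iio i, c j with hAdef
    have hA0 : ∀ i, 0 ≤ A i := fun i => Finset.sum_nonneg fun j _ => hc j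
    have hIic : ∀ i : Fin n, A i + c i = ∑ j ∈ Finset.Iic i, c j := by
      intro i
      rw [hAdef]
      have hnot : i ∉ Finset.Iio i := by simp
      rw [← Finset.Iio_insert i, Finset.sum_insert hnot]
      ring
    have hAc : ∀ i, A i + c i ≤ m * L := by
      intro i
      rw [hIic i]
      calc ∑ j ∈ Finset.Iic i, c j ≤ ∑ j, c j :=
            Finset.sum_le_sum_of_subset_of_nonneg (Finset.subset_univ _)
              (fun j _ _ => hc j)
        _ ≤ m * L := hsum
    have hAmono : ∀ i i' : Fin n, i < i' → A i + c i ≤ A i' := by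
      intro i i' h
      rw [hIic i, hAdef]
      refine Finset.sum_le_sum_of_subset_of_nonneg ?_ (fun j _ _ => hc j)
      intro j hj
      rw [Finset.mem_Iic] at hj
      rw [Finset.mem_Iio]
      exact lt_of_le_of_lt hj h
    set T : Fin n → Fin m → Set ℝ := fun i k =>
      Set.Ioc (A i) (A i + c i) ∩ Set.Ioc ((k:ℝ)*L) (((k:ℝ)+1)*L) with hTdef
    refine ⟨fun i k => (fun x => x + ((k:ℝ) * L - t1)) ⁻¹' T i k, ?_, ?_, ?_, ?_, ?_⟩
    · intro i k
      exact (measurableSet_Ioc.inter measurableSet_Ioc).preimage (measurable_add_const _)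
    · intro i k x hx
      simp only [Set.mem_preimage, hTdef, Set.mem_inter_iff, Set.mem_Ioc] at hx
      obtain ⟨-, h2⟩ := hx
      obtain ⟨h3, h4⟩ := h2
      constructor <;> [linarith; linarith [h4]]
    · intro i k k' hkk'
      rw [Set.disjoint_left]
      intro x hx hx'
      simp only [Set.mem_preimage, hTdef, Set.mem_inter_iff, Set.mem_Ioc] at hx hx'
      obtain ⟨⟨ha1, ha2⟩, ⟨hb1, hb2⟩⟩ := hx
      obtain ⟨⟨ha1', ha2'⟩, ⟨hb1', hb2'⟩⟩ := hx'
      have hLpos : 0 < L := by linarith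
      have hci : c i ≤ L := hle i
      have hne : (k:ℕ) ≠ (k':ℕ) := fun h => hkk' (Fin.ext h)
      rcases lt_or_gt_of_ne hne with h | h
      · have h1 : ((k:ℕ):ℝ) + 1 ≤ ((k':ℕ):ℝ) := by exact_mod_cast h
        have h2 := mul_le_mul_of_nonneg_right h1 hL0
        linarith
      · have h1 : ((k':ℕ):ℝ) + 1 ≤ ((k:ℕ):ℝ) := by exact_mod_cast h
        have h2 := mul_le_mul_of_nonneg_right h1 hL0
        linarith
    · intro k i i' hii'
      rw [Set.disjoint_left]
      intro x hx hx'
      simp only [Set.mem_preimage, hTdef, Set.mem_inter_iff, Set.mem_Ioc] at hx hx'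
      obtain ⟨⟨ha1, ha2⟩, -⟩ := hx
      obtain ⟨⟨hb1, hb2⟩, -⟩ := hx'
      rcases lt_or_gt_of_ne hii' with h | h
      · have := hAmono i i' h; linarith
      · have := hAmono i' i h; linarith
    · intro i
      have htrans : ∀ k : Fin m,
          volume ((fun x => x + ((k:ℝ) * L - t1)) ⁻¹' T i k) = volume (T i k) :=
        fun k => measure_preimage_add_right volume _ _
      have hTmeas : ∀ k : Fin m, MeasurableSet (T i k) :=
        fun k => measurableSet_Ioc.inter measurableSet_Ioc
      have hTfin : ∀ k : Fin m, volume (T i k) ≠ ⊤ := by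
        intro k
        exact (lt_of_le_of_lt (measure_mono Set.inter_subset_left) measure_Ioc_lt_top).ne
      have hTdisj : ∀ k k' : Fin m, k ≠ k' → Disjoint (T i k) (T i k') := by
        intro k k' hkk'
        refine Disjoint.mono Set.inter_subset_right Set.inter_subset_right ?_
        rw [Set.Ioc_disjoint_Ioc]
        have hne : (k:ℕ) ≠ (k':ℕ) := fun h => hkk' (Fin.ext h)
        rcases lt_or_gt_of_ne hne with h | h
        · have h1 : ((k:ℕ):ℝ) + 1 ≤ ((k':ℕ):ℝ) := by exact_mod_cast h
          have := mul_le_mul_of_nonneg_right h1 hL0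
          calc min (((k:ℝ)+1)*L) (((k':ℝ)+1)*L) ≤ ((k:ℝ)+1)*L := min_le_left _ _
            _ ≤ (k':ℝ)*L := this
            _ ≤ max ((k:ℝ)*L) ((k':ℝ)*L) := le_max_right _ _
        · have h1 : ((k':ℕ):ℝ) + 1 ≤ ((k:ℕ):ℝ) := by exact_mod_cast h
          have := mul_le_mul_of_nonneg_right h1 hL0
          calc min (((k:ℝ)+1)*L) (((k':ℝ)+1)*L) ≤ ((k':ℝ)+1)*L := min_le_right _ _
            _ ≤ (k:ℝ)*L := this
            _ ≤ max ((k:ℝ)*L) ((k':ℝ)*L) := le_max_left _ _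
      have hunion : (⋃ k ∈ (Finset.univ : Finset (Fin m)), T i k)
          = Set.Ioc (A i) (A i + c i) := by
        have hgrid : (⋃ k ∈ (Finset.univ : Finset (Fin m)),
            Set.Ioc ((k:ℝ)*L) (((k:ℝ)+1)*L)) = Set.Ioc 0 ((m:ℝ)*L) := by
          rw [← grid_union m L hL0]
          ext x
          simp only [Set.mem_iUnion, Finset.mem_univ, Finset.mem_range, exists_prop,
            true_and]
          constructor
          · rintro ⟨k, hk⟩; exact ⟨k, k.isLt, hk⟩
          · rintro ⟨k, hk, hx⟩; exact ⟨⟨k, hk⟩, hx⟩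
        calc (⋃ k ∈ (Finset.univ : Finset (Fin m)), T i k)
            = Set.Ioc (A i) (A i + c i) ∩ (⋃ k ∈ (Finset.univ : Finset (Fin m)),
              Set.Ioc ((k:ℝ)*L) (((k:ℝ)+1)*L)) := by
              simp only [hTdef, Set.inter_iUnion]
          _ = Set.Ioc (A i) (A i + c i) := by
              rw [hgrid]
              exact Set.inter_eq_self_of_subset_left (Set.Ioc_subset_Ioc (hA0 i) (hAc i))
      calc ∑ k : Fin m, (volume ((fun x => x + ((k:ℝ) * L - t1)) ⁻¹' T i k)).toReal
          = ∑ k : Fin m, (volume (T i k)).toReal := by simp_rw [htrans]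
        _ = (∑ k : Fin m, volume (T i k)).toReal := (ENNReal.toReal_sum fun k _ => hTfin k).symm
        _ = (volume (⋃ k ∈ (Finset.univ : Finset (Fin m)), T i k)).toReal := by
            rw [measure_biUnion_finset (fun k _ k' _ h => hTdisj k k' h)
              (fun k _ => hTmeas k)]
        _ = c i := by
            rw [hunion, Real.volume_Ioc, add_sub_cancel_left,
              ENNReal.toReal_ofReal (hc i)]
end

section
/- Under McNaughton's wrap-around algorithm (pack jobs left-to-right filling processors sequentially), any job whose execution requirement c_i is at most the interval length t2 − t1 is scheduled on at most two processors, and is never scheduled simultaneously on both. -/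
/-- Under McNaughton's wrap-around packing, a job with requirement at most the
window length `L` occupies at most two processors, and its two pieces are
disjoint in (window-relative) time. -/
theorem mcnaughton_split_at_most_two (n : ℕ) (L : ℝ) (hL : 0 < L)
    (c : Fin n → ℝ) (hc : ∀ j, 0 ≤ c j)
    (s : Fin n → ℝ) (hs : ∀ j, s j = ∑ j' ∈ Finset.Iio j, c j')
    (i : Fin n) (hci : c i ≤ L) :
    ({k : ℕ | (Set.Ico (s i) (s i + c i) ∩
        Set.Ico ((k : ℝ) * L) (((k : ℝ) + 1) * L)).Nonempty}.ncard ≤ 2) ∧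
    (∀ k k' : ℕ, k ≠ k' →
      Disjoint
        ((fun x => x - (k : ℝ) * L) ''
          (Set.Ico (s i) (s i + c i) ∩ Set.Ico ((k : ℝ) * L) (((k : ℝ) + 1) * L)))
        ((fun x => x - (k' : ℝ) * L) ''
          (Set.Ico (s i) (s i + c i) ∩ Set.Ico ((k' : ℝ) * L) (((k' : ℝ) + 1) * L)))) := by
  have ha0 : 0 ≤ s i := by
    rw [hs]; exact Finset.sum_nonneg fun j _ => hc j
  constructor
  · set m : ℤ := ⌊s i / L⌋ with hm
    have hm0 : 0 ≤ m := Int.floor_nonneg.2 (div_nonneg ha0 hL.le)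
    have key : {k : ℕ | (Set.Ico (s i) (s i + c i) ∩
        Set.Ico ((k : ℝ) * L) (((k : ℝ) + 1) * L)).Nonempty} ⊆ {m.toNat, m.toNat + 1} := by
      intro k hk
      obtain ⟨x, ⟨hx1, hx2⟩, hx3, hx4⟩ := hk
      have h1 : m ≤ (k : ℤ) := by
        have : s i / L < (k : ℝ) + 1 := by
          rw [div_lt_iff₀ hL]
          calc s i ≤ x := hx1
            _ < ((k : ℝ) + 1) * L := hx4
        have := Int.floor_lt.2 (by push_cast; linarith : s i / L < (((k : ℤ) + 1 : ℤ) : ℝ))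
        omega
      have h2 : (k : ℤ) ≤ m + 1 := by
        have hk1 : ((k : ℝ) - 1) * L < s i := by
          have : (k : ℝ) * L ≤ x := hx3
          have : x < s i + c i := hx2
          nlinarith
        have : ((k : ℤ) - 1 : ℤ) ≤ m := by
          apply Int.le_floor.2
          rw [le_div_iff₀ hL]
          push_cast
          linarith
        omega
      simp only [Set.mem_insert_iff, Set.mem_singleton_iff]
      omega
    calc ({k : ℕ | (Set.Ico (s i) (s i + c i) ∩
        Set.Ico ((k : ℝ) * L) (((k : ℝ) + 1) * L)).Nonempty}).ncard
        ≤ ({m.toNat, m.toNat + 1} : Set ℕ).ncard :=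
          Set.ncard_le_ncard key ((Set.finite_singleton _).insert _)
      _ ≤ ({m.toNat + 1} : Set ℕ).ncard + 1 := Set.ncard_insert_le _ _
      _ ≤ 2 := by rw [Set.ncard_singleton]
  · intro k k' hkk
    rw [Set.disjoint_left]
    rintro y ⟨x, ⟨⟨hx1, hx2⟩, _⟩, rfl⟩ ⟨x', ⟨⟨hx1', hx2'⟩, _⟩, hx'⟩
    have hdiff : x - x' = ((k : ℝ) - (k' : ℝ)) * L := by
      have : x - (k : ℝ) * L = x' - (k' : ℝ) * L := hx'.symm
      ring_nf
      ring_nf at this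
      linarith
    have h1 : |x - x'| < L := by
      rw [abs_lt]
      constructor <;> linarith
    have hne : ((k : ℤ) - (k' : ℤ)) ≠ 0 := by
      have : (k : ℤ) ≠ (k' : ℤ) := by exact_mod_cast hkk
      omega
    have h2 : (1 : ℝ) ≤ |(k : ℝ) - (k' : ℝ)| := by
      rw [show ((k : ℝ) - (k' : ℝ)) = (((k : ℤ) - (k' : ℤ) : ℤ) : ℝ) by push_cast; ring]
      rw [← Int.cast_abs]
      exact_mod_cast Int.one_le_abs hne
    have : L ≤ |x - x'| := by
      rw [hdiff, abs_mul, abs_of_pos hL]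
      nlinarith
    linarith
end

section
/- Let τ = {(T_1, C_1, D_1), …, (T_n, C_n, D_n)} be constrained-deadline sporadic tasks with C_i < D_i for all i, and let m' ≥ (Σ_{i=1}^n C_i)/(min_i (D_i − C_i)) + n. Then for every k and every A_k ≥ 0: n·(A_k + D_k − C_k) + Σ_{i=1}^n C_i + m'·C_k ≤ m'·(A_k + D_k), and hence the demand upper bound DEM(A_k + D_k, m') ≤ m'·(A_k + D_k) = sbf_{⟨Π, m'Π, m'⟩}(A_k + D_k). -/
/-- Upper bound on the number of processors needed for gEDF schedulability:
if m' ≥ (∑ C_i)/min_i(D_i − C_i) + n, then for every task k and every A_k ≥ 0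
the demand bound n(A_k + D_k − C_k) + ∑C_i + m'·C_k is at most m'(A_k + D_k),
hence DEM(A_k + D_k, m') ≤ sbf of the dedicated supply ⟨Π, m'Π, m'⟩. -/
theorem processor_upper_bound (n : ℕ) (hn : 0 < n)
    (hne : (Finset.univ : Finset (Fin n)).Nonempty)
    (T C D : Fin n → ℝ) (hC : ∀ i, 0 < C i) (hCD : ∀ i, C i < D i)
    (m' : ℕ)
    (hm' : (∑ i, C i) / (Finset.univ.inf' hne fun i => D i - C i) + (n : ℝ) ≤ (m' : ℝ)) :
    ∀ k : Fin n, ∀ A : ℝ, 0 ≤ A →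
      ((n : ℝ) * (A + D k - C k) + (∑ i, C i) + (m' : ℝ) * C k ≤ (m' : ℝ) * (A + D k)) ∧
      (∀ DEMv : ℝ,
        DEMv ≤ (n : ℝ) * (A + D k - C k) + (∑ i, C i) + (m' : ℝ) * C k →
        DEMv ≤ (m' : ℝ) * (A + D k)) := by
  intro k A hA
  set δ := (Finset.univ.inf' hne fun i => D i - C i) with hδ
  have hδpos : 0 < δ := by
    rw [hδ, Finset.lt_inf'_iff]
    intro i _
    linarith [hCD i]
  have hδle : δ ≤ D k - C k := Finset.inf'_le _ (Finset.mem_univ k)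
  have hsum : (∑ i, C i) / δ ≤ (m' : ℝ) - n := by linarith
  have hsum' : (∑ i, C i) ≤ ((m' : ℝ) - n) * δ := by
    rwa [div_le_iff₀ hδpos] at hsum
  have hmn : (0:ℝ) ≤ (m' : ℝ) - n := by
    have hCsum : 0 < ∑ i, C i := Finset.sum_pos (fun i _ => hC i) hne
    have : 0 < (∑ i, C i) / δ := div_pos hCsum hδpos
    linarith
  have key : (n : ℝ) * (A + D k - C k) + (∑ i, C i) + (m' : ℝ) * C k ≤ (m' : ℝ) * (A + D k) := by
    have h1 : (∑ i, C i) ≤ ((m' : ℝ) - n) * (A + D k - C k) := by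
      calc (∑ i, C i) ≤ ((m' : ℝ) - n) * δ := hsum'
        _ ≤ ((m' : ℝ) - n) * (A + D k - C k) := by
            apply mul_le_mul_of_nonneg_left _ hmn
            linarith
    nlinarith
  exact ⟨key, fun DEMv h => le_trans h key⟩
end

section
/- Suppose the demand bound satisfies DEM(A_k + D_k, m') ≤ C_Σ + m'·C_k + Σ_{i=1}^n dbf_i(A_k + D_k) and dbf_i(t) ≤ (C_i/T_i)·t + (T_i − D_i)·(C_i/T_i), and the linear supply bound is lsbf(t) = (Θ/Π)·t − B with B = (Θ/Π)·(2 + 2(Π − Θ/m')). If Θ/Π > U_τ := Σ_i C_i/T_i and DEM(A_k + D_k, m') > lsbf(A_k + D_k), then A_k < (C_Σ + m'·C_k − D_k·(Θ/Π − U_τ) + U + B)/(Θ/Π − U_τ), where C_Σ is the sum of the m'−1 largest C_i and U = Σ_i (T_i − D_i)·(C_i/T_i). -/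
/-- Bound on the interval lengths A_k that need to be checked: if the demand
upper bound exceeds the linear supply bound, then A_k is bounded above. -/
theorem Ak_bound (n : ℕ) (T C D : Fin n → ℝ) (hT : ∀ i, 0 < T i)
    (m' : ℕ) (hm'pos : 1 ≤ m') (Θ P : ℝ) (hP : 0 < P)
    (Csum : ℝ) (k : Fin n) (A : ℝ) (hA : 0 ≤ A) (hDk : 0 ≤ D k)
    (dbf : Fin n → ℝ → ℝ)
    (hdbf : ∀ i t, 0 ≤ t → dbf i t ≤ (C i / T i) * t + (T i - D i) * (C i / T i))
    (DEMv : ℝ)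
    (hDEM : DEMv ≤ Csum + (m' : ℝ) * C k + ∑ i, dbf i (A + D k))
    (Uτ U B : ℝ)
    (hUτ : Uτ = ∑ i, C i / T i)
    (hU : U = ∑ i, (T i - D i) * (C i / T i))
    (hB : B = (Θ / P) * (2 + 2 * (P - Θ / (m' : ℝ))))
    (hband : Uτ < Θ / P)
    (hviol : (Θ / P) * (A + D k) - B < DEMv) :
    A < (Csum + (m' : ℝ) * C k - D k * (Θ / P - Uτ) + U + B) / (Θ / P - Uτ) := by
  have ht : 0 ≤ A + D k := by linarith
  have hsum : ∑ i, dbf i (A + D k) ≤ Uτ * (A + D k) + U := by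
    rw [hUτ, hU, Finset.sum_mul, ← Finset.sum_add_distrib]
    exact Finset.sum_le_sum fun i _ => hdbf i _ ht
  have hr : 0 < Θ / P - Uτ := by linarith
  rw [lt_div_iff₀ hr]
  nlinarith [hviol, hDEM, hsum]
end
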